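/- arXiv:1104.0136 — 2 statements merged into one kernel-verified Lean document; each statement's English description precedes it below -/
import Mathlib

section
/- Let Δ ≥ 1 and n_M be natural numbers, let l = n_M div Δ and Q = n_M mod Δ, and suppose l is odd. Then for every integer x with 0 ≤ x ≤ n_M: ρ(x) = n_M − 2x if 0 ≤ x ≤ Q + Δ(l−1)/2; ρ(x) = Δ(l+1)/2 − x if Q + Δ(l−1)/2 ≤ x ≤ Δ(l+1)/2; and ρ(x) = 0 if Δ(l+1)/2 ≤ x ≤ n_M. -/
/-- Down-shift operator `S^Δ` on matrices over `F₂`: shifts rows down by `Δ`,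
filling the top `Δ` rows with zeros. -/
def shiftS (Δ : ℕ) {r c : ℕ} (X : Matrix (Fin r) (Fin c) (ZMod 2)) :
    Matrix (Fin r) (Fin c) (ZMod 2) :=
  fun i j => if _h : Δ ≤ (i : ℕ) then
      X ⟨(i : ℕ) - Δ, lt_of_le_of_lt (Nat.sub_le _ _) i.isLt⟩ j
    else 0

/-- The function `φ(p,q)`: with `l = p div q` (convention `p div 0 = 0`),
`φ(p,q) = q + l·q/2` for `l` even, `φ(p,q) = p − (l−1)·q/2` for `l` odd. -/
def phi (p q : ℕ) : ℕ :=
  if Even (p / q) then q + (p / q / 2) * q else p - ((p / q - 1) / 2) * q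

/-- Probability that the random variable `f` takes the value `a`, for the
discrete probability mass function `p`. -/
noncomputable def prEq {Ω α : Type*} [Fintype Ω] [DecidableEq α]
    (p : Ω → ℝ) (f : Ω → α) (a : α) : ℝ :=
  ∑ ω ∈ Finset.univ.filter (fun ω => f ω = a), p ω

/-- Shannon entropy (base 2) of the random variable `f` under the pmf `p`. -/
noncomputable def entropy2 {Ω α : Type*} [Fintype Ω] [Fintype α] [DecidableEq α]
    (p : Ω → ℝ) (f : Ω → α) : ℝ :=
  -∑ a : α, prEq p f a * Real.logb 2 (prEq p f a)

/-- Independence of two random variables under the pmf `p`. -/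
def IndepRV {Ω α β : Type*} [Fintype Ω] [DecidableEq α] [DecidableEq β]
    (p : Ω → ℝ) (f : Ω → α) (g : Ω → β) : Prop :=
  ∀ a b, prEq p (fun ω => (f ω, g ω)) (a, b) = prEq p f a * prEq p g b

/-- Mutual independence of three random variables under the pmf `p`. -/
def MutIndep3 {Ω α β γ : Type*} [Fintype Ω] [DecidableEq α] [DecidableEq β]
    [DecidableEq γ] (p : Ω → ℝ) (f : Ω → α) (g : Ω → β) (h : Ω → γ) : Prop :=
  ∀ a b c, prEq p (fun ω => (f ω, g ω, h ω)) (a, b, c)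
      = prEq p f a * prEq p g b * prEq p h c

/-- Mutual information (base 2) `I(f; g) = H(f) + H(g) − H(f, g)`. -/
noncomputable def mutInfo2 {Ω α β : Type*} [Fintype Ω] [Fintype α] [Fintype β]
    [DecidableEq α] [DecidableEq β] (p : Ω → ℝ) (f : Ω → α) (g : Ω → β) : ℝ :=
  entropy2 p f + entropy2 p g - entropy2 p (fun ω => (f ω, g ω))

/-- Number of ones in a vector over `F₂`. -/
def wt {n : ℕ} (a : Fin n → ZMod 2) : ℕ :=
  (Finset.univ.filter (fun i => a i = 1)).card

/-- `γ1(a)`: complement of `a` stacked over the all-ones vector of length `Δ`. -/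
def gamma1 (Δ : ℕ) {nM : ℕ} (a : Fin nM → ZMod 2) : Fin (nM + Δ) → ZMod 2 :=
  fun i => if h : (i : ℕ) < nM then 1 - a ⟨(i : ℕ), h⟩ else 1

/-- `γ2(a)`: the zero vector of length `Δ` stacked over the complement of `a`. -/
def gamma2 (Δ : ℕ) {nM : ℕ} (a : Fin nM → ZMod 2) : Fin (nM + Δ) → ZMod 2 :=
  fun i => if _h : Δ ≤ (i : ℕ) then
      1 - a ⟨(i : ℕ) - Δ, by have := i.isLt; omega⟩
    else 0

/-- The overlap `γ1(a)^T γ2(a)`: number of positions where both are one. -/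
def overlap (Δ : ℕ) {nM : ℕ} (a : Fin nM → ZMod 2) : ℕ :=
  (Finset.univ.filter (fun i => gamma1 Δ a i = 1 ∧ gamma2 Δ a i = 1)).card

/-- `ρ(x)`: minimal overlap over all vectors `a ∈ F₂^{n_M}` with `|a| = x`. -/
noncomputable def rho (Δ nM x : ℕ) : ℕ :=
  sInf (overlap Δ '' {a : Fin nM → ZMod 2 | wt a = x})

/-!
Write `T ⊆ [0, n)` for the positions of the ones of `a`. The overlap counts the zeros `j` of `a`
such that `j + Δ` is a zero too (or `≥ n`); the remaining zeros, those with a one at `j + Δ`,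
inject into the ones (`j ↦ j + Δ`) and into the set `O` of positions of odd height `j / Δ`
(send `j` to whichever of `j`, `j + Δ` has odd height). As there are `n - x` zeros,
`ρ(x) ≥ n - x - min(x, |O|)`. Equality is attained by filling `O` first, then
`U = O ∪ [n - Δ, n)`, then anything: below every one in `O` there is a zero outside `U`, and
once `U` is full every zero has a one `Δ` above it. Since `j ↦ j + Δ` maps `[0, n) \ U` onto `O`,
`|U| + |O| = n`; and for `n / Δ = 2k + 1` one counts `|O| = Δk + n % Δ`.
-/

open Finset

section

variable (Δ n : ℕ) (T : Finset ℕ)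

def shiftOverlap : ℕ := #{j ∈ range n \ T | j + Δ ∉ T}

def zerosBeforeOne : Finset ℕ := {j ∈ range n \ T | j + Δ ∈ T}

def oddBlocks : Finset ℕ := {j ∈ range n | Odd (j / Δ)}

def oddBlocksOrTail : Finset ℕ := {j ∈ range n | Odd (j / Δ) ∨ n ≤ j + Δ}

variable {Δ n T}

lemma shiftOverlap_add_card_zerosBeforeOne (hT : T ⊆ range n) :
    shiftOverlap Δ n T + #(zerosBeforeOne Δ n T) = n - #T := by
  rw [shiftOverlap, zerosBeforeOne, add_comm, card_filter_add_card_filter_not,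
    card_sdiff_of_subset hT, card_range]

lemma card_zerosBeforeOne_le_card : #(zerosBeforeOne Δ n T) ≤ #T :=
  card_le_card_of_injOn (· + Δ) (fun _ hj => (mem_filter.mp hj).2)
    (fun _ _ _ _ h => add_right_cancel h)

lemma card_zerosBeforeOne_le_card_oddBlocks (hΔ : 0 < Δ) (hT : T ⊆ range n) :
    #(zerosBeforeOne Δ n T) ≤ #(oddBlocks Δ n) := by
  have hmem : ∀ j ∈ zerosBeforeOne Δ n T, j ∉ T ∧ j + Δ ∈ T := by
    intro j hj
    simp only [zerosBeforeOne, mem_filter, mem_sdiff] at hj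
    exact ⟨hj.1.2, hj.2⟩
  refine card_le_card_of_injOn (fun j => if Odd (j / Δ) then j else j + Δ) ?_ ?_
  · intro j hj
    obtain ⟨hjT, hjΔT⟩ := hmem j hj
    have hjΔ : j + Δ < n := mem_range.mp (hT hjΔT)
    simp only [coe_filter, oddBlocks, Set.mem_ofPred_eq, mem_range]
    split_ifs with hodd
    · exact ⟨by omega, hodd⟩
    · rw [Nat.add_div_right _ hΔ, Nat.odd_add_one]
      exact ⟨hjΔ, hodd⟩
  · intro j hj j' hj' h
    obtain ⟨hjT, hjΔT⟩ := hmem j hj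
    obtain ⟨hj'T, hj'ΔT⟩ := hmem j' hj'
    simp only at h
    split_ifs at h <;> first | omega | (subst h; contradiction)

lemma oddBlocks_subset_oddBlocksOrTail : oddBlocks Δ n ⊆ oddBlocksOrTail Δ n :=
  monotone_filter_right _ fun _ _ => Or.inl

lemma add_mem_oddBlocks {j : ℕ} (hΔ : 0 < Δ) (hj : j ∈ range n \ oddBlocksOrTail Δ n) :
    j + Δ ∈ oddBlocks Δ n := by
  simp only [oddBlocksOrTail, mem_sdiff, mem_filter, not_and, not_or] at hj
  obtain ⟨heven, hjΔn⟩ := hj.2 hj.1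
  simp only [oddBlocks, mem_filter, mem_range, Nat.add_div_right _ hΔ, Nat.odd_add_one]
  exact ⟨Nat.lt_of_not_le hjΔn, heven⟩

lemma le_and_sub_mem_of_mem_oddBlocks {j : ℕ} (hΔ : 0 < Δ) (hj : j ∈ oddBlocks Δ n) :
    Δ ≤ j ∧ j - Δ ∈ range n \ oddBlocksOrTail Δ n := by
  simp only [oddBlocks, mem_filter, mem_range] at hj
  obtain ⟨hjn, hodd⟩ := hj
  have hΔj : Δ ≤ j := (Nat.one_le_div_iff hΔ).mp (Nat.pos_of_ne_zero fun h => by simp [h] at hodd)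
  have hdiv : (j - Δ) / Δ + 1 = j / Δ := by
    rw [← Nat.add_div_right _ hΔ, Nat.sub_add_cancel hΔj]
  rw [← hdiv, Nat.odd_add_one] at hodd
  simp only [oddBlocksOrTail, mem_sdiff, mem_filter, mem_range, Nat.sub_add_cancel hΔj]
  exact ⟨hΔj, by omega, fun h => h.2.elim hodd (by omega)⟩

lemma card_inter_oddBlocks_le_card_zerosBeforeOne (hΔ : 0 < Δ)
    (hT : T ⊆ oddBlocksOrTail Δ n) :
    #(T ∩ oddBlocks Δ n) ≤ #(zerosBeforeOne Δ n T) := by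
  refine card_le_card_of_injOn (· - Δ) (fun j hj => ?_) (fun j hj j' hj' h => ?_)
  · obtain ⟨hjT, hjO⟩ := mem_inter.mp hj
    obtain ⟨hΔj, hsub⟩ := le_and_sub_mem_of_mem_oddBlocks hΔ hjO
    obtain ⟨hjn, hjU⟩ := mem_sdiff.mp hsub
    simp only [coe_filter, zerosBeforeOne, Set.mem_ofPred_eq, mem_sdiff, Nat.sub_add_cancel hΔj]
    exact ⟨⟨hjn, fun h => hjU (hT h)⟩, hjT⟩
  · have := (le_and_sub_mem_of_mem_oddBlocks hΔ (mem_inter.mp hj).2).1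
    have := (le_and_sub_mem_of_mem_oddBlocks hΔ (mem_inter.mp hj').2).1
    simp only at h
    omega

lemma shiftOverlap_eq_zero (hΔ : 0 < Δ) (hT : oddBlocksOrTail Δ n ⊆ T) :
    shiftOverlap Δ n T = 0 := by
  rw [shiftOverlap, card_eq_zero, filter_eq_empty_iff]
  intro j hj hjΔ
  have hjU : j ∈ range n \ oddBlocksOrTail Δ n :=
    mem_sdiff.mpr ⟨(mem_sdiff.mp hj).1, fun h => (mem_sdiff.mp hj).2 (hT h)⟩
  exact hjΔ (hT (oddBlocks_subset_oddBlocksOrTail (add_mem_oddBlocks hΔ hjU)))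

lemma card_oddBlocksOrTail_add_card_oddBlocks (hΔ : 0 < Δ) :
    #(oddBlocksOrTail Δ n) + #(oddBlocks Δ n) = n := by
  have hsub : oddBlocksOrTail Δ n ⊆ range n := filter_subset _ _
  have hcard : #(range n \ oddBlocksOrTail Δ n) = #(oddBlocks Δ n) :=
    card_nbij' (· + Δ) (· - Δ) (fun _ hj => add_mem_oddBlocks hΔ hj)
      (fun _ hj => (le_and_sub_mem_of_mem_oddBlocks hΔ hj).2)
      (fun j _ => Nat.add_sub_cancel j Δ)
      (fun _ hj => Nat.sub_add_cancel (le_and_sub_mem_of_mem_oddBlocks hΔ hj).1)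
  have := card_le_card hsub
  rw [← hcard, card_sdiff_of_subset hsub, card_range]
  rw [card_range] at this
  omega

lemma card_oddBlocks_eq_count (n : ℕ) :
    #(oddBlocks Δ n) = Nat.count (fun j => Odd (j / Δ)) n :=
  (Nat.count_eq_card_filter_range _ n).symm

lemma card_oddBlocks_add_of_le {Q : ℕ} (hΔ : 0 < Δ) (hQ : Q ≤ Δ) :
    #(oddBlocks Δ (Δ + Q)) = Q := by
  rw [card_oddBlocks_eq_count, Nat.count_add,
    Nat.count_of_forall_not fun m hm => by simp [Nat.div_eq_of_lt hm],
    Nat.count_of_forall fun m hm => by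
      simp [Nat.add_div_left _ hΔ, Nat.div_eq_of_lt (lt_of_lt_of_le hm hQ)], zero_add]

lemma card_oddBlocks_two_mul_add (hΔ : 0 < Δ) (k s : ℕ) :
    #(oddBlocks Δ (2 * Δ * k + s)) = Δ * k + #(oddBlocks Δ s) := by
  induction k with
  | zero => simp
  | succ k ih =>
    have hperiod : ∀ m, Odd ((2 * Δ + m) / Δ) ↔ Odd (m / Δ) := fun m => by
      rw [show 2 * Δ + m = m + Δ * 2 by ring, Nat.add_mul_div_left _ _ hΔ]
      simp [Nat.odd_add]
    have h2Δ := card_oddBlocks_add_of_le hΔ le_rfl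
    rw [card_oddBlocks_eq_count] at ih h2Δ ⊢
    rw [show 2 * Δ * (k + 1) + s = 2 * Δ + (2 * Δ * k + s) by ring, Nat.count_add,
      two_mul, h2Δ, ← two_mul]
    simp only [hperiod]
    rw [ih]
    ring

lemma card_oddBlocks_of_div_odd {k Q : ℕ} (hΔ : 0 < Δ) (hQ : Q ≤ Δ) :
    #(oddBlocks Δ (Δ * (2 * k + 1) + Q)) = Δ * k + Q := by
  rw [show Δ * (2 * k + 1) + Q = 2 * Δ * k + (Δ + Q) by ring,
    card_oddBlocks_two_mul_add hΔ, card_oddBlocks_add_of_le hΔ hQ]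

end

lemma zmod_two_eq_zero_iff_ne_one (z : ZMod 2) : z = 0 ↔ z ≠ 1 := by
  revert z; decide

def supportNat {n : ℕ} (a : Fin n → ZMod 2) : Finset ℕ :=
  (univ.filter fun i => a i = 1).map Fin.valEmbedding

section supportNat

variable {n : ℕ} (a : Fin n → ZMod 2)

lemma mem_supportNat {j : ℕ} : j ∈ supportNat a ↔ ∃ h : j < n, a ⟨j, h⟩ = 1 := by
  simp [supportNat, Fin.exists_iff]

lemma supportNat_subset_range : supportNat a ⊆ range n := fun j hj => by
  obtain ⟨h, -⟩ := (mem_supportNat a).mp hj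
  exact mem_range.mpr h

lemma wt_eq_card_supportNat : wt a = #(supportNat a) := by
  rw [wt, supportNat, card_map]

lemma gamma1_eq_one_iff (Δ : ℕ) (i : Fin (n + Δ)) :
    gamma1 Δ a i = 1 ↔ (i : ℕ) ∉ supportNat a := by
  rw [gamma1, mem_supportNat]
  split_ifs with h <;> simp [h, zmod_two_eq_zero_iff_ne_one]

lemma gamma2_eq_one_iff (Δ : ℕ) (i : Fin (n + Δ)) :
    gamma2 Δ a i = 1 ↔ Δ ≤ i ∧ (i : ℕ) - Δ ∉ supportNat a := by
  rw [gamma2, mem_supportNat]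
  split_ifs with h
  · simp [h, zmod_two_eq_zero_iff_ne_one, show (i : ℕ) - Δ < n by omega]
  · simp [h]

lemma overlap_eq_shiftOverlap (Δ : ℕ) :
    overlap Δ a = shiftOverlap Δ n (supportNat a) := by
  rw [overlap, shiftOverlap]
  refine card_bij' (fun i _ => (i : ℕ) - Δ)
    (fun j hj => ⟨j + Δ, by simp only [mem_filter, mem_sdiff, mem_range] at hj; omega⟩)
    (fun i hi => ?_) (fun j hj => ?_) (fun i hi => ?_) (fun j _ => by simp)
  · simp only [mem_filter, mem_univ, true_and, gamma1_eq_one_iff, gamma2_eq_one_iff] at hi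
    obtain ⟨hiS, hΔi, hiΔS⟩ := hi
    simp only [mem_filter, mem_sdiff, mem_range, Nat.sub_add_cancel hΔi]
    exact ⟨⟨by omega, hiΔS⟩, hiS⟩
  · simp only [mem_filter, mem_sdiff, mem_range] at hj
    simp only [mem_filter, mem_univ, true_and, gamma1_eq_one_iff, gamma2_eq_one_iff,
      Nat.add_sub_cancel]
    exact ⟨hj.2, by omega, hj.1.2⟩
  · simp only [mem_filter, mem_univ, true_and, gamma2_eq_one_iff] at hi
    ext
    simp only
    omega

end supportNat

lemma supportNat_indicator {n : ℕ} {T : Finset ℕ} (hT : T ⊆ range n) :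
    supportNat (fun i : Fin n => if (i : ℕ) ∈ T then 1 else 0) = T := by
  ext j
  rw [mem_supportNat]
  constructor
  · rintro ⟨_, h⟩
    by_contra hj
    simp [hj] at h
  · intro hj
    exact ⟨mem_range.mp (hT hj), by simp [hj]⟩

lemma rho_eq_of_forall_le {Δ n x m : ℕ}
    (hlb : ∀ T ⊆ range n, #T = x → m ≤ shiftOverlap Δ n T)
    (hwit : ∃ T ⊆ range n, #T = x ∧ shiftOverlap Δ n T ≤ m) :
    rho Δ n x = m := by
  obtain ⟨T, hT, hcard, hle⟩ := hwit
  set a : Fin n → ZMod 2 := fun i => if (i : ℕ) ∈ T then 1 else 0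
  have ha : supportNat a = T := supportNat_indicator hT
  have hmem : overlap Δ a ∈ overlap Δ '' {b : Fin n → ZMod 2 | wt b = x} :=
    ⟨a, by rw [Set.mem_ofPred_eq, wt_eq_card_supportNat, ha, hcard], rfl⟩
  have hbound : ∀ y ∈ overlap Δ '' {b : Fin n → ZMod 2 | wt b = x}, m ≤ y := by
    rintro _ ⟨b, hb, rfl⟩
    rw [overlap_eq_shiftOverlap]
    exact hlb _ (supportNat_subset_range b) (by rw [← wt_eq_card_supportNat]; exact hb)
  refine le_antisymm ((Nat.sInf_le hmem).trans ?_) (le_csInf ⟨_, hmem⟩ hbound)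
  rwa [overlap_eq_shiftOverlap, ha]

lemma exists_card_eq_shiftOverlap_le {Δ n x : ℕ} (hΔ : 0 < Δ) (hx : x ≤ n) :
    ∃ T ⊆ range n, #T = x ∧ shiftOverlap Δ n T ≤ n - x - min x #(oddBlocks Δ n) := by
  have hsum := card_oddBlocksOrTail_add_card_oddBlocks hΔ (n := n)
  have hUr : oddBlocksOrTail Δ n ⊆ range n := filter_subset _ _
  by_cases hxU : x ≤ #(oddBlocksOrTail Δ n)
  · obtain ⟨T, hTU, hTcard, hTO⟩ : ∃ T ⊆ oddBlocksOrTail Δ n,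
        #T = x ∧ min x #(oddBlocks Δ n) ≤ #(T ∩ oddBlocks Δ n) := by
      by_cases hxO : x ≤ #(oddBlocks Δ n)
      · obtain ⟨T, hTO, hcard⟩ := exists_subset_card_eq hxO
        refine ⟨T, hTO.trans oddBlocks_subset_oddBlocksOrTail, hcard, ?_⟩
        rw [inter_eq_left.mpr hTO]
        omega
      · obtain ⟨T, hOT, hTU, hcard⟩ :=
          exists_subsuperset_card_eq oddBlocks_subset_oddBlocksOrTail (by omega) hxU
        refine ⟨T, hTU, hcard, ?_⟩
        rw [inter_eq_right.mpr hOT]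
        omega
    have hTr := hTU.trans hUr
    have := shiftOverlap_add_card_zerosBeforeOne (Δ := Δ) hTr
    have := card_inter_oddBlocks_le_card_zerosBeforeOne hΔ hTU
    exact ⟨T, hTr, hTcard, by omega⟩
  · obtain ⟨T, hUT, hTr, hcard⟩ :=
      exists_subsuperset_card_eq hUr (n := x) (by omega) (by rwa [card_range])
    exact ⟨T, hTr, hcard, (shiftOverlap_eq_zero hΔ hUT).trans_le (Nat.zero_le _)⟩

theorem rho_eq_sub_sub_min {Δ n x : ℕ} (hΔ : 0 < Δ) (hx : x ≤ n) :
    rho Δ n x = n - x - min x #(oddBlocks Δ n) := by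
  refine rho_eq_of_forall_le (fun T hT hcard => ?_) (exists_card_eq_shiftOverlap_le hΔ hx)
  have := shiftOverlap_add_card_zerosBeforeOne (Δ := Δ) hT
  have := card_zerosBeforeOne_le_card (Δ := Δ) (n := n) (T := T)
  have := card_zerosBeforeOne_le_card_oddBlocks hΔ hT
  omega

/-- Closed form of `ρ` when `l = n_M div Δ` is odd (with `Q = n_M mod Δ`):
`ρ(x) = n_M − 2x` for `0 ≤ x ≤ Q + Δ(l−1)/2`, `ρ(x) = Δ(l+1)/2 − x` for
`Q + Δ(l−1)/2 ≤ x ≤ Δ(l+1)/2`, and `ρ(x) = 0` for `Δ(l+1)/2 ≤ x ≤ n_M`. -/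
theorem rho_closed_form_odd (Δ nM : ℕ) (hΔ : 1 ≤ Δ) (hOdd : Odd (nM / Δ)) :
    ∀ x : ℕ, x ≤ nM →
      (x ≤ nM % Δ + Δ * (nM / Δ - 1) / 2 → rho Δ nM x = nM - 2 * x) ∧
      (nM % Δ + Δ * (nM / Δ - 1) / 2 ≤ x → x ≤ Δ * (nM / Δ + 1) / 2 →
        rho Δ nM x = Δ * (nM / Δ + 1) / 2 - x) ∧
      (Δ * (nM / Δ + 1) / 2 ≤ x → rho Δ nM x = 0) := by
  intro x hx
  obtain ⟨k, hk⟩ := hOdd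
  have hn : nM = 2 * (Δ * k) + Δ + nM % Δ := by
    rw [← mul_left_comm, ← mul_add_one, ← hk, Nat.div_add_mod]
  have hp : #(oddBlocks Δ nM) = Δ * k + nM % Δ := by
    have := card_oddBlocks_of_div_odd (k := k) hΔ (Nat.mod_lt nM hΔ).le
    rwa [← hk, Nat.div_add_mod] at this
  have hlo : Δ * (nM / Δ - 1) / 2 = Δ * k := by
    rw [hk, Nat.add_sub_cancel, mul_left_comm, Nat.mul_div_cancel_left _ two_pos]
  have hhi : Δ * (nM / Δ + 1) / 2 = Δ * k + Δ := by
    rw [hk, show Δ * (2 * k + 1 + 1) = 2 * (Δ * k + Δ) by ring,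
      Nat.mul_div_cancel_left _ two_pos]
  have hQ := Nat.mod_lt nM hΔ
  rw [hlo, hhi, rho_eq_sub_sub_min hΔ hx, hp]
  omega
end

section
/- Let n_1, n_2, n_3, n_M, n_D be natural numbers with n_1 ≥ n_2 and n_D + n_M ≤ min(n_2, n_3), and let q = max(n_1, n_3). Let N ≥ 1 be a natural number and let X_1, X_2, X_3 be mutually independent random matrices taking values in F_2^{q×N} on a finite (discrete) probability space. Define Y_1 = S^{q−n_1} X_1 ⊕ S^{q−n_2} X_2 ⊕ S^{q−n_D} X_3 and Y_2 = S^{q−n_M} X_1 ⊕ S^{q−n_M} X_2 ⊕ S^{q−n_3} X_3. Then I((X_1, X_2); Y_1) + 2·I(X_3; Y_2) ≤ N · (n_1 + 2n_3 − n_D − n_M), where I denotes mutual information with logarithm base 2. -/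
/-!
Write `q = max n₁ n₃`, `Z = S^{q-n_D} X₃` and `B = S^{q-n_M} X₁ ⊕ S^{q-n_M} X₂`. Since `Z` is
independent of `(X₁, X₂)` and enters `Y₁` additively, `I((X₁,X₂); Y₁) = H(Y₁) - H(Z)`; likewise
`I(X₃; Y₂) = H(Y₂) - H(B)`. A matrix has entropy at most that of any variable determining a block
of its rows plus `N` bits per remaining row. The first `q - n₁ + n_M` rows of `Y₁` are determined by
`S^{q-n_M} X₁` and `S^{q-n_M} X₂`, each of entropy at most `H(B)` by independence, so
`H(Y₁) ≤ 2 H(B) + (n₁ - n_M) N`; the first `q - n₃ + n_D` rows of `Y₂` are determined by `Z`, so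
`H(Y₂) ≤ H(Z) + (n₃ - n_D) N`. In `I₁ + 2 I₂` the `H(B)` terms cancel, and `H(Z) ≤ n_D N` bounds
the rest.
-/

open Finset Real Function

lemma mul_logb_mul_of_le {c x y : ℝ} (hc : 0 ≤ c) (hx : c ≤ x) (hy : c ≤ y) :
    c * logb 2 (x * y) = c * logb 2 x + c * logb 2 y := by
  rcases hc.eq_or_lt with h | h
  · simp [← h]
  · rw [logb_mul (h.trans_le hx).ne' (h.trans_le hy).ne', mul_add]

lemma mul_logb_sub_mul_logb_le {x y : ℝ} (hx : 0 ≤ x) (hy : 0 ≤ y) (hxy : y = 0 → x = 0) :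
    x * logb 2 y - x * logb 2 x ≤ (y - x) / log 2 := by
  have hlog2 : 0 < log 2 := log_pos one_lt_two
  rcases hx.eq_or_lt with rfl | hx
  · simpa using div_nonneg hy hlog2.le
  have hy : 0 < y := hy.lt_of_ne fun h => hx.ne' (hxy h.symm)
  have key : x * log (y / x) ≤ y - x :=
    calc x * log (y / x) ≤ x * (y / x - 1) :=
          mul_le_mul_of_nonneg_left (log_le_sub_one_of_pos (by positivity)) hx.le
      _ = y - x := by field_simp
  calc x * logb 2 y - x * logb 2 x = x * log (y / x) / log 2 := by
        rw [log_div hy.ne' hx.ne', logb, logb]; ring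
    _ ≤ (y - x) / log 2 := div_le_div_of_nonneg_right key hlog2.le

lemma sum_mul_logb_le_sum_mul_logb {α : Type*} [Fintype α] {P Q : α → ℝ} (hP : ∀ a, 0 ≤ P a)
    (hQ : ∀ a, 0 ≤ Q a) (hP1 : ∑ a, P a = 1) (hQ1 : ∑ a, Q a ≤ 1)
    (hPQ : ∀ a, Q a = 0 → P a = 0) :
    ∑ a, P a * logb 2 (Q a) ≤ ∑ a, P a * logb 2 (P a) := by
  have h := sum_le_sum fun a (_ : a ∈ univ) => mul_logb_sub_mul_logb_le (hP a) (hQ a) (hPQ a)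
  rw [sum_sub_distrib, ← sum_div, sum_sub_distrib, hP1] at h
  have : (∑ a, Q a - 1) / log 2 ≤ 0 :=
    div_nonpos_of_nonpos_of_nonneg (by linarith) (log_pos one_lt_two).le
  linarith

section Entropy

variable {Ω α β : Type*} [Fintype Ω] [DecidableEq α] [DecidableEq β] {p : Ω → ℝ}

lemma prEq_nonneg (hp : ∀ ω, 0 ≤ p ω) (f : Ω → α) (a : α) : 0 ≤ prEq p f a :=
  sum_nonneg fun ω _ => hp ω

lemma le_prEq_self (hp : ∀ ω, 0 ≤ p ω) (f : Ω → α) (ω : Ω) : p ω ≤ prEq p f (f ω) :=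
  single_le_sum (fun ω _ => hp ω) (by simp)

lemma prEq_congr {f : Ω → α} {g : Ω → β} {a : α} {b : β} (h : ∀ ω, f ω = a ↔ g ω = b) :
    prEq p f a = prEq p g b := by
  simp only [prEq, h]

lemma sum_prEq_mul [Fintype α] (f : Ω → α) (F : α → ℝ) :
    ∑ a, prEq p f a * F a = ∑ ω, p ω * F (f ω) := by
  simp only [prEq, sum_mul]
  rw [← sum_fiberwise univ f fun ω => p ω * F (f ω)]
  refine sum_congr rfl fun a _ => sum_congr rfl fun ω hω => ?_
  rw [(mem_filter.1 hω).2]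

lemma sum_prEq [Fintype α] (hsum : ∑ ω, p ω = 1) (f : Ω → α) : ∑ a, prEq p f a = 1 := by
  simpa [hsum] using sum_prEq_mul (p := p) f 1

lemma prEq_comp [Fintype α] (f : Ω → α) (φ : α → β) (b : β) :
    prEq p (fun ω => φ (f ω)) b = ∑ a, prEq p f a * if φ a = b then 1 else 0 := by
  rw [sum_prEq_mul, prEq, sum_filter]
  simp

lemma prEq_eq_sum_pair [Fintype β] (f : Ω → α) (g : Ω → β) (a : α) :
    prEq p f a = ∑ b, prEq p (fun ω => (f ω, g ω)) (a, b) := by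
  rw [prEq, ← sum_fiberwise _ g]
  simp only [prEq, filter_filter, Prod.mk.injEq]

lemma prEq_pair_le_left (hp : ∀ ω, 0 ≤ p ω) (f : Ω → α) (g : Ω → β) (a : α) (b : β) :
    prEq p (fun ω => (f ω, g ω)) (a, b) ≤ prEq p f a :=
  sum_le_sum_of_subset_of_nonneg (monotone_filter_right _ fun _ _ h => (Prod.mk.inj h).1)
    fun ω _ _ => hp ω

lemma prEq_pair_le_right (hp : ∀ ω, 0 ≤ p ω) (f : Ω → α) (g : Ω → β) (a : α) (b : β) :
    prEq p (fun ω => (f ω, g ω)) (a, b) ≤ prEq p g b :=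
  sum_le_sum_of_subset_of_nonneg (monotone_filter_right _ fun _ _ h => (Prod.mk.inj h).2)
    fun ω _ _ => hp ω

lemma entropy2_eq_sum [Fintype α] (f : Ω → α) :
    entropy2 p f = -∑ ω, p ω * logb 2 (prEq p f (f ω)) := by
  rw [entropy2, sum_prEq_mul f fun a => logb 2 (prEq p f a)]

lemma entropy2_le_logb_card [Fintype α] (hp : ∀ ω, 0 ≤ p ω) (hsum : ∑ ω, p ω = 1)
    (f : Ω → α) : entropy2 p f ≤ logb 2 (Fintype.card α) := by
  obtain ⟨ω, -, -⟩ := exists_ne_zero_of_sum_ne_zero (hsum.trans_ne one_ne_zero)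
  have hα : (0 : ℝ) < Fintype.card α := Nat.cast_pos.2 (Fintype.card_pos_iff.2 ⟨f ω⟩)
  have h := sum_mul_logb_le_sum_mul_logb (prEq_nonneg hp f) (fun _ => inv_nonneg.2 hα.le)
    (sum_prEq hsum f) (by simp [hα.ne']) (fun _ h => absurd h (inv_ne_zero hα.ne'))
  rw [← sum_mul, sum_prEq hsum, one_mul, logb_inv] at h
  rw [entropy2]
  linarith

lemma entropy2_pair_le_add [Fintype α] [Fintype β] (hp : ∀ ω, 0 ≤ p ω)
    (hsum : ∑ ω, p ω = 1) (f : Ω → α) (g : Ω → β) :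
    entropy2 p (fun ω => (f ω, g ω)) ≤ entropy2 p f + entropy2 p g := by
  have hQ1 : ∑ ab : α × β, prEq p f ab.1 * prEq p g ab.2 = 1 := by
    simp only [Fintype.sum_prod_type, ← mul_sum, ← sum_mul, sum_prEq hsum, one_mul]
  have hPQ : ∀ ab : α × β, prEq p f ab.1 * prEq p g ab.2 = 0 →
      prEq p (fun ω => (f ω, g ω)) ab = 0 := fun ⟨a, b⟩ h =>
    (mul_eq_zero.1 h).elim
      (fun h => le_antisymm (h ▸ prEq_pair_le_left hp f g a b) (prEq_nonneg hp _ _))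
      (fun h => le_antisymm (h ▸ prEq_pair_le_right hp f g a b) (prEq_nonneg hp _ _))
  have gibbs := sum_mul_logb_le_sum_mul_logb (prEq_nonneg hp _)
    (fun _ => mul_nonneg (prEq_nonneg hp _ _) (prEq_nonneg hp _ _)) (sum_prEq hsum _) hQ1.le hPQ
  rw [sum_prEq_mul (fun ω => (f ω, g ω)) fun ab => logb 2 (prEq p f ab.1 * prEq p g ab.2),
    sum_prEq_mul (fun ω => (f ω, g ω))] at gibbs
  simp only [mul_logb_mul_of_le (hp _) (le_prEq_self hp f _) (le_prEq_self hp g _),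
    sum_add_distrib] at gibbs
  rw [entropy2_eq_sum, entropy2_eq_sum f, entropy2_eq_sum g]
  linarith

lemma entropy2_le_pair_left [Fintype α] [Fintype β] (hp : ∀ ω, 0 ≤ p ω) (f : Ω → α)
    (g : Ω → β) : entropy2 p f ≤ entropy2 p (fun ω => (f ω, g ω)) := by
  rw [entropy2_eq_sum, entropy2_eq_sum, neg_le_neg_iff]
  refine sum_le_sum fun ω _ => ?_
  rcases (hp ω).eq_or_lt with h | h
  · simp [← h]
  · exact mul_le_mul_of_nonneg_left (logb_le_logb_of_le one_lt_two
      (h.trans_le (le_prEq_self hp _ ω)) (prEq_pair_le_left hp _ _ _ _)) h.le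

lemma entropy2_comp_of_injective [Fintype α] [Fintype β] (f : Ω → α) {ψ : α → β}
    (hψ : Injective ψ) : entropy2 p (fun ω => ψ (f ω)) = entropy2 p f := by
  simp only [entropy2_eq_sum, prEq_congr fun _ => hψ.eq_iff]

lemma entropy2_le_of_factorsThrough [Fintype α] [Fintype β] (hp : ∀ ω, 0 ≤ p ω)
    {f : Ω → α} {g : Ω → β} (h : FactorsThrough f g) : entropy2 p f ≤ entropy2 p g := by
  rcases isEmpty_or_nonempty α with hα | ⟨⟨a⟩⟩
  · have : IsEmpty Ω := f.isEmpty
    simp [entropy2, prEq]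
  obtain ⟨φ, rfl⟩ : ∃ φ : β → α, f = fun ω => φ (g ω) :=
    ⟨extend g f fun _ => a, funext fun ω => (h.extend_apply _ ω).symm⟩
  calc entropy2 p (fun ω => φ (g ω)) ≤ entropy2 p (fun ω => (φ (g ω), g ω)) :=
        entropy2_le_pair_left hp _ g
    _ = entropy2 p g := entropy2_comp_of_injective g (ψ := fun b => (φ b, b))
        fun _ _ h => (Prod.mk.inj h).2

lemma entropy2_pair_of_indepRV [Fintype α] [Fintype β] (hp : ∀ ω, 0 ≤ p ω) {f : Ω → α}
    {g : Ω → β} (h : IndepRV p f g) :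
    entropy2 p (fun ω => (f ω, g ω)) = entropy2 p f + entropy2 p g := by
  rw [entropy2_eq_sum, entropy2_eq_sum f, entropy2_eq_sum g, ← neg_add, ← sum_add_distrib]
  refine congrArg _ (sum_congr rfl fun ω _ => ?_)
  rw [h, mul_logb_mul_of_le (hp ω) (le_prEq_self hp f ω) (le_prEq_self hp g ω)]

end Entropy

section Independence

variable {Ω α β γ δ : Type*} [Fintype Ω] [DecidableEq α] [DecidableEq β] [DecidableEq γ]
  [DecidableEq δ] {p : Ω → ℝ}

lemma IndepRV.symm {f : Ω → α} {g : Ω → β} (h : IndepRV p f g) : IndepRV p g f := fun b a => by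
  rw [prEq_congr (g := fun ω => (f ω, g ω)) (b := (a, b)) fun ω => by simp [and_comm], h,
    mul_comm]

lemma IndepRV.comp [Fintype α] [Fintype β] {f : Ω → α} {g : Ω → β} (h : IndepRV p f g)
    (φ : α → γ) (ψ : β → δ) : IndepRV p (fun ω => φ (f ω)) (fun ω => ψ (g ω)) := fun c d => by
  rw [show prEq p (fun ω => (φ (f ω), ψ (g ω))) (c, d) = _ from
      prEq_comp (fun ω => (f ω, g ω)) (Prod.map φ ψ) (c, d),
    prEq_comp f φ, prEq_comp g ψ, sum_mul_sum, Fintype.sum_prod_type]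
  refine sum_congr rfl fun a _ => sum_congr rfl fun b _ => ?_
  rw [h]
  simp only [Prod.map_apply, Prod.mk.injEq]
  split_ifs <;> simp_all

lemma IndepRV.comp_right [Fintype α] [Fintype β] {f : Ω → α} {g : Ω → β} (h : IndepRV p f g)
    (ψ : β → γ) : IndepRV p f (fun ω => ψ (g ω)) :=
  h.comp id ψ

lemma MutIndep3.indepRV_left [Fintype γ] (hsum : ∑ ω, p ω = 1) {f : Ω → α} {g : Ω → β}
    {h : Ω → γ} (H : MutIndep3 p f g h) : IndepRV p f g := fun a b => by
  have e : ∀ c, prEq p (fun ω => ((f ω, g ω), h ω)) ((a, b), c)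
      = prEq p f a * prEq p g b * prEq p h c := fun c => by
    rw [← H]; exact prEq_congr fun ω => by simp [and_assoc]
  rw [prEq_eq_sum_pair _ h, sum_congr rfl fun c _ => e c, ← mul_sum, sum_prEq hsum, mul_one]

lemma MutIndep3.indepRV_pair_left [Fintype γ] (hsum : ∑ ω, p ω = 1) {f : Ω → α} {g : Ω → β}
    {h : Ω → γ} (H : MutIndep3 p f g h) : IndepRV p (fun ω => (f ω, g ω)) h :=
  fun ⟨a, b⟩ c => by
    rw [H.indepRV_left hsum a b, ← H]; exact prEq_congr fun ω => by simp [and_assoc]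

lemma mutInfo2_eq_of_indepRV [Fintype α] [Fintype β] [Fintype γ] (hp : ∀ ω, 0 ≤ p ω)
    {X : Ω → α} {Z : Ω → β} (hXZ : IndepRV p X Z) {φ : α → β → γ} (hφ : ∀ a, Injective (φ a)) :
    mutInfo2 p X (fun ω => φ (X ω) (Z ω))
      = entropy2 p (fun ω => φ (X ω) (Z ω)) - entropy2 p Z := by
  have hpair : entropy2 p (fun ω => (X ω, φ (X ω) (Z ω))) = entropy2 p X + entropy2 p Z := by
    rw [← entropy2_pair_of_indepRV hp hXZ]
    refine entropy2_comp_of_injective (fun ω => (X ω, Z ω)) (ψ := fun ab => (ab.1, φ ab.1 ab.2))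
      fun ⟨a, b⟩ ⟨a', b'⟩ h => ?_
    simp only [Prod.mk.injEq] at h
    obtain ⟨rfl, h⟩ := h
    rw [hφ a h]
  rw [mutInfo2, hpair]
  ring

lemma entropy2_right_le_entropy2_add [Fintype α] [AddGroup α] (hp : ∀ ω, 0 ≤ p ω)
    (hsum : ∑ ω, p ω = 1) {X Z : Ω → α} (hXZ : IndepRV p X Z) :
    entropy2 p Z ≤ entropy2 p (fun ω => X ω + Z ω) := by
  have h := mutInfo2_eq_of_indepRV hp hXZ (φ := (· + ·)) add_right_injective
  have := entropy2_pair_le_add hp hsum X fun ω => X ω + Z ω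
  rw [mutInfo2] at h
  linarith

lemma entropy2_left_le_entropy2_add [Fintype α] [AddGroup α] (hp : ∀ ω, 0 ≤ p ω)
    (hsum : ∑ ω, p ω = 1) {X Z : Ω → α} (hXZ : IndepRV p X Z) :
    entropy2 p X ≤ entropy2 p (fun ω => X ω + Z ω) := by
  have h := mutInfo2_eq_of_indepRV hp hXZ.symm (φ := fun z x => x + z) add_left_injective
  have := entropy2_pair_le_add hp hsum Z fun ω => X ω + Z ω
  rw [mutInfo2] at h
  linarith

end Independence

section Rows

variable {Ω : Type*} [Fintype Ω] {p : Ω → ℝ}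

lemma entropy2_matrix_le {ι κ : Type*} [Fintype ι] [DecidableEq ι] [Fintype κ] [DecidableEq κ]
    (hp : ∀ ω, 0 ≤ p ω) (hsum : ∑ ω, p ω = 1) (f : Ω → Matrix ι κ (ZMod 2)) :
    entropy2 p f ≤ Fintype.card ι * Fintype.card κ := by
  refine (entropy2_le_logb_card hp hsum f).trans_eq ?_
  rw [← Fintype.card_congr Matrix.of, Fintype.card_fun, Fintype.card_fun, ZMod.card, ← pow_mul,
    Nat.cast_pow, Nat.cast_ofNat, logb_pow, logb_self_eq_one one_lt_two, mul_one, Nat.cast_mul,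
    mul_comm]

lemma entropy2_le_add_of_rows_determined {ι κ γ : Type*} [Fintype ι] [DecidableEq ι]
    [Fintype κ] [DecidableEq κ] [Fintype γ] [DecidableEq γ] (hp : ∀ ω, 0 ≤ p ω)
    (hsum : ∑ ω, p ω = 1) (Y : Ω → Matrix ι κ (ZMod 2)) (g : Ω → γ) (s : Finset ι)
    (hY : ∀ ω ω', g ω = g ω' → ∀ i ∈ s, Y ω i = Y ω' i) :
    entropy2 p Y ≤ entropy2 p g + #sᶜ * Fintype.card κ := by
  let R : Ω → Matrix {i // i ∈ sᶜ} κ (ZMod 2) := fun ω i => Y ω i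
  have hfac : FactorsThrough Y fun ω => (g ω, R ω) := fun ω ω' h => by
    obtain ⟨hg, hR⟩ := Prod.mk.inj h
    funext i
    by_cases hi : i ∈ s
    · exact hY ω ω' hg i hi
    · exact congrFun hR ⟨i, mem_compl.2 hi⟩
  calc entropy2 p Y ≤ entropy2 p fun ω => (g ω, R ω) := entropy2_le_of_factorsThrough hp hfac
    _ ≤ entropy2 p g + entropy2 p R := entropy2_pair_le_add hp hsum g R
    _ ≤ entropy2 p g + #sᶜ * Fintype.card κ := by
        simpa only [Fintype.card_coe, add_le_add_iff_left] using entropy2_matrix_le hp hsum R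

end Rows

lemma card_compl_filter_val_lt (q m : ℕ) :
    #(univ.filter fun i : Fin q => (i : ℕ) < m)ᶜ = q - m := by
  rw [card_compl, Fin.card_filter_val_lt, Fintype.card_fin]
  omega

lemma Matrix.add_apply_row {m n α : Type*} [Add α] (A B : Matrix m n α) (i : m) :
    (A + B) i = A i + B i :=
  rfl

lemma shiftS_apply_of_lt {Δ r c : ℕ} (X : Matrix (Fin r) (Fin c) (ZMod 2)) {i : Fin r}
    (hi : (i : ℕ) < Δ) : shiftS Δ X i = 0 := by
  funext j
  simp [shiftS, not_le.2 hi]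

lemma shiftS_apply_eq_of_shiftS_eq {Δ k r c : ℕ} {X X' : Matrix (Fin r) (Fin c) (ZMod 2)}
    (h : shiftS (r - k) X = shiftS (r - k) X') {i : Fin r} (hi : (i : ℕ) < Δ + k) :
    shiftS Δ X i = shiftS Δ X' i := by
  funext j
  simp only [shiftS]
  split_ifs with hΔ
  · simpa [shiftS] using congrFun (congrFun h ⟨i - Δ + (r - k), by omega⟩) j
  · rfl

section Channel

variable {Ω : Type*} [Fintype Ω] {p : Ω → ℝ} {q N : ℕ}

lemma entropy2_shiftS_le (hp : ∀ ω, 0 ≤ p ω) (hsum : ∑ ω, p ω = 1) (k : ℕ)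
    (X : Ω → Matrix (Fin q) (Fin N) (ZMod 2)) :
    entropy2 p (fun ω => shiftS (q - k) (X ω)) ≤ k * N := by
  refine (entropy2_le_add_of_rows_determined hp hsum _ (fun _ => ())
    (univ.filter fun i : Fin q => (i : ℕ) < q - k) fun ω ω' _ i hi => ?_).trans ?_
  · rw [shiftS_apply_of_lt _ (mem_filter.1 hi).2, shiftS_apply_of_lt _ (mem_filter.1 hi).2]
  have hunit : entropy2 p (fun _ => ()) ≤ 0 := by
    simpa using entropy2_le_logb_card hp hsum fun _ => ()
  have hrows : ((q - (q - k) : ℕ) : ℝ) ≤ k := by exact_mod_cast (by omega : q - (q - k) ≤ k)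
  rw [card_compl_filter_val_lt, Fintype.card_fin]
  nlinarith [(Nat.cast_nonneg N : (0 : ℝ) ≤ N)]

lemma entropy2_output_one_le (hp : ∀ ω, 0 ≤ p ω) (hsum : ∑ ω, p ω = 1) {n1 n2 nD nM : ℕ}
    (h21 : n2 ≤ n1) (h1q : n1 ≤ q) (hDM : nD + nM ≤ n1)
    (X1 X2 X3 : Ω → Matrix (Fin q) (Fin N) (ZMod 2)) :
    entropy2 p (fun ω => shiftS (q - n1) (X1 ω) + shiftS (q - n2) (X2 ω) + shiftS (q - nD) (X3 ω))
      ≤ entropy2 p (fun ω => shiftS (q - nM) (X1 ω)) + entropy2 p (fun ω => shiftS (q - nM) (X2 ω))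
        + ((n1 : ℝ) - nM) * N := by
  refine (entropy2_le_add_of_rows_determined hp hsum _
    (fun ω => (shiftS (q - nM) (X1 ω), shiftS (q - nM) (X2 ω)))
    (univ.filter fun i : Fin q => (i : ℕ) < q - n1 + nM) fun ω ω' hω i hi => ?_).trans ?_
  · have hi := (mem_filter.1 hi).2
    obtain ⟨h1, h2⟩ := Prod.mk.inj hω
    simp only [Matrix.add_apply_row]
    rw [shiftS_apply_eq_of_shiftS_eq h1 (by omega), shiftS_apply_eq_of_shiftS_eq h2 (by omega),
      shiftS_apply_of_lt (X3 ω) (by omega), shiftS_apply_of_lt (X3 ω') (by omega)]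
  rw [card_compl_filter_val_lt, Fintype.card_fin, show q - (q - n1 + nM) = n1 - nM by omega,
    Nat.cast_sub (by omega)]
  linarith [entropy2_pair_le_add hp hsum (fun ω => shiftS (q - nM) (X1 ω))
    (fun ω => shiftS (q - nM) (X2 ω))]

lemma entropy2_output_two_le (hp : ∀ ω, 0 ≤ p ω) (hsum : ∑ ω, p ω = 1) {n3 nD nM : ℕ}
    (h3q : n3 ≤ q) (hDM : nD + nM ≤ n3) (X1 X2 X3 : Ω → Matrix (Fin q) (Fin N) (ZMod 2)) :
    entropy2 p (fun ω => shiftS (q - nM) (X1 ω) + shiftS (q - nM) (X2 ω) + shiftS (q - n3) (X3 ω))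
      ≤ entropy2 p (fun ω => shiftS (q - nD) (X3 ω)) + ((n3 : ℝ) - nD) * N := by
  refine (entropy2_le_add_of_rows_determined hp hsum _ (fun ω => shiftS (q - nD) (X3 ω))
    (univ.filter fun i : Fin q => (i : ℕ) < q - n3 + nD) fun ω ω' hω i hi => ?_).trans_eq ?_
  · have hi := (mem_filter.1 hi).2
    simp only [Matrix.add_apply_row]
    rw [shiftS_apply_eq_of_shiftS_eq hω (by omega), shiftS_apply_of_lt (X1 ω) (by omega),
      shiftS_apply_of_lt (X1 ω') (by omega), shiftS_apply_of_lt (X2 ω) (by omega),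
      shiftS_apply_of_lt (X2 ω') (by omega)]
  rw [card_compl_filter_val_lt, Fintype.card_fin, show q - (q - n3 + nD) = n3 - nD by omega,
    Nat.cast_sub (by omega)]

end Channel

theorem converse_bound_eight_general {Ω : Type} [Fintype Ω] (n1 n2 n3 nM nD N : ℕ)
    (h12 : n2 ≤ n1) (hweak : nD + nM ≤ min n2 n3)
    (p : Ω → ℝ) (hp : ∀ ω, 0 ≤ p ω) (hsum : ∑ ω, p ω = 1)
    (X1 X2 X3 : Ω → Matrix (Fin (max n1 n3)) (Fin N) (ZMod 2))
    (hindep : MutIndep3 p X1 X2 X3) :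
    mutInfo2 p (fun ω => (X1 ω, X2 ω))
        (fun ω => shiftS (max n1 n3 - n1) (X1 ω)
          + shiftS (max n1 n3 - n2) (X2 ω)
          + shiftS (max n1 n3 - nD) (X3 ω))
      + 2 * mutInfo2 p X3
        (fun ω => shiftS (max n1 n3 - nM) (X1 ω)
          + shiftS (max n1 n3 - nM) (X2 ω)
          + shiftS (max n1 n3 - n3) (X3 ω))
      ≤ (N : ℝ) * ((n1 : ℝ) + 2 * (n3 : ℝ) - (nD : ℝ) - (nM : ℝ)) := by
  have h3 : nD + nM ≤ n3 := hweak.trans (min_le_right _ _)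
  have hX12 := hindep.indepRV_pair_left hsum
  have hI1 := mutInfo2_eq_of_indepRV hp (hX12.comp_right (shiftS (max n1 n3 - nD)))
    (φ := fun x z => shiftS (max n1 n3 - n1) x.1 + shiftS (max n1 n3 - n2) x.2 + z)
    fun _ => add_right_injective _
  have hI2 := mutInfo2_eq_of_indepRV hp
    (hX12.symm.comp_right fun x => shiftS (max n1 n3 - nM) x.1 + shiftS (max n1 n3 - nM) x.2)
    (φ := fun x z => z + shiftS (max n1 n3 - n3) x) fun _ => add_left_injective _
  have hS := (hindep.indepRV_left hsum).comp (shiftS (max n1 n3 - nM)) (shiftS (max n1 n3 - nM))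
  have hY1 := entropy2_output_one_le hp hsum (nD := nD) (nM := nM) h12 (le_max_left n1 n3)
    (by omega) X1 X2 X3
  have hY2 := entropy2_output_two_le hp hsum (le_max_right n1 n3) h3 X1 X2 X3
  have hZ := entropy2_shiftS_le hp hsum nD X3
  have hB1 := entropy2_left_le_entropy2_add hp hsum hS
  have hB2 := entropy2_right_le_entropy2_add hp hsum hS
  dsimp only at hI1 hI2
  rw [hI1, hI2]
  linarith

/-- Converse bound (8): for mutually independent inputs,
`I((X₁,X₂); Y₁) + 2·I(X₃; Y₂) ≤ N·(n₁ + 2n₃ − n_D − n_M)`. -/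
theorem converse_bound_eight {Ω : Type} [Fintype Ω] (n1 n2 n3 nM nD N : ℕ)
    (h12 : n2 ≤ n1) (hweak : nD + nM ≤ min n2 n3) (hN : 1 ≤ N)
    (p : Ω → ℝ) (hp : ∀ ω, 0 ≤ p ω) (hsum : ∑ ω, p ω = 1)
    (X1 X2 X3 : Ω → Matrix (Fin (max n1 n3)) (Fin N) (ZMod 2))
    (hindep : MutIndep3 p X1 X2 X3) :
    mutInfo2 p (fun ω => (X1 ω, X2 ω))
        (fun ω => shiftS (max n1 n3 - n1) (X1 ω)
          + shiftS (max n1 n3 - n2) (X2 ω)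
          + shiftS (max n1 n3 - nD) (X3 ω))
      + 2 * mutInfo2 p X3
        (fun ω => shiftS (max n1 n3 - nM) (X1 ω)
          + shiftS (max n1 n3 - nM) (X2 ω)
          + shiftS (max n1 n3 - n3) (X3 ω))
      ≤ (N : ℝ) * ((n1 : ℝ) + 2 * (n3 : ℝ) - (nD : ℝ) - (nM : ℝ)) :=
  converse_bound_eight_general n1 n2 n3 nM nD N h12 hweak p hp hsum X1 X2 X3 hindep
end
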